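/- arXiv:1707.03194 — 2 statements merged into one kernel-verified Lean document; each statement's English description precedes it below -/
import Mathlib

section
/- The function R: ℝ → ℝ given by R(x) = |x| + x²/2, whose Fenchel conjugate is R*(u) = (max{|u| − 1, 0})²/2 and which satisfies dom(∂R) = dom(∂R*) = ℝ, is not mirror-stratifiable: there exists no pair of stratifications (𝒮, 𝒮*) of ℝ and ℝ with respect to which R is mirror-stratifiable. In particular, 𝒥_R(ℝ) = ℝ ∖ {−1, 1}, so 𝒥_R cannot map any stratification of ℝ onto a stratification (i.e. a partition) of ℝ. -/
open Filter Topology Set Pointwise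

noncomputable section

variable {E : Type*} [NormedAddCommGroup E] [InnerProductSpace ℝ E]

/-- The convex subdifferential of an `EReal`-valued function. -/
def subdiff (R : E → EReal) (x : E) : Set E :=
  {u | ∀ y, R x + ((inner ℝ u (y - x) : ℝ) : EReal) ≤ R y}

/-- The Legendre–Fenchel conjugate. -/
def fenchel (R : E → EReal) (u : E) : EReal :=
  ⨆ x, ((inner ℝ u x : ℝ) : EReal) - R x

/-- Domain of the subdifferential. -/
def domSubdiff (R : E → EReal) : Set E := {x | (subdiff R x).Nonempty}

/-- A proper extended-real-valued function. -/
def ProperFn (R : E → EReal) : Prop := (∀ x, R x ≠ ⊥) ∧ ∃ x, R x ≠ ⊤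

/-- Convexity of an extended-real-valued function, via its epigraph. -/
def ConvexFn (R : E → EReal) : Prop :=
  Convex ℝ {p : E × ℝ | R p.1 ≤ (p.2 : EReal)}

/-- Proper, convex and lower semicontinuous. -/
def ProperConvexLsc (R : E → EReal) : Prop :=
  ProperFn R ∧ ConvexFn R ∧ LowerSemicontinuous R

/-- The correspondence operator `𝒥_R`. -/
def corrOp (R : E → EReal) (S : Set E) : Set E :=
  ⋃ x ∈ S, intrinsicInterior ℝ (subdiff R x)

/-- The partial order on strata: `M ≤ M' ⟺ M ⊆ cl M'`. -/
def stratLE (M M' : Set E) : Prop := M ⊆ closure M'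

/-- A stratification of `D`: a finite partition into nonempty strata
satisfying the frontier condition. -/
structure IsStratification (D : Set E) (S : Set (Set E)) : Prop where
  finite : S.Finite
  nonempty : ∀ M ∈ S, M.Nonempty
  cover : ⋃₀ S = D
  pairwiseDisjoint : ∀ M ∈ S, ∀ M' ∈ S, M ≠ M' → Disjoint M M'
  frontier_cond : ∀ M ∈ S, ∀ M' ∈ S, (M ∩ closure M').Nonempty → M ⊆ closure M'

/-- `R` is mirror-stratifiable with respect to a primal stratification `S` of
`dom ∂R` and a dual stratification `Sd` of `dom ∂R*`. -/
structure IsMirrorStratifiable (R : E → EReal) (S Sd : Set (Set E)) : Prop where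
  primal : IsStratification (domSubdiff R) S
  dual : IsStratification (domSubdiff (fenchel R)) Sd
  maps_primal : ∀ M ∈ S, corrOp R M ∈ Sd
  maps_dual : ∀ Md ∈ Sd, corrOp (fenchel R) Md ∈ S
  pairing : ∀ M ∈ S, ∀ Md ∈ Sd, (corrOp R M = Md ↔ corrOp (fenchel R) Md = M)
  decreasing : ∀ M ∈ S, ∀ M' ∈ S, (stratLE M M' ↔ stratLE (corrOp R M') (corrOp R M))

/-! The function `R` is finite, so `∂R(x)` is the set of `u` realizing equality in the
Fenchel–Young inequality `u x ≤ R(x) + R*(u)`. Solving it gives `∂R(x) = {x + sign x}` for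
`x ≠ 0` and `∂R(0) = [-1, 1]`, whose relative interior is `(-1, 1)`; hence `±1 ∉ 𝒥_R(ℝ)`.
On the other hand, in a mirror stratification every dual stratum `M*` equals `𝒥_R(𝒥_{R*}(M*))`,
so the strata of `𝒮*` cover `dom ∂R* = ℝ` only inside `𝒥_R(ℝ)`. -/

section Conjugate

variable {f g : E → ℝ}

theorem fenchel_coe_eq_of_fenchelYoung (hle : ∀ u x, inner ℝ u x ≤ f x + g u)
    (hattained : ∀ u, ∃ x, inner ℝ u x = f x + g u) :
    fenchel (fun x => (f x : EReal)) = fun u => (g u : EReal) := by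
  funext u
  apply le_antisymm
  · refine iSup_le fun x => ?_
    rw [← EReal.coe_sub, EReal.coe_le_coe_iff]
    linarith [hle u x]
  · obtain ⟨x, hx⟩ := hattained u
    refine le_iSup_of_le x (le_of_eq ?_)
    rw [← EReal.coe_sub, EReal.coe_eq_coe_iff]
    linarith

theorem inner_sub_le_of_fenchel_coe_eq
    (hfg : fenchel (fun x => (f x : EReal)) = fun u => (g u : EReal)) (u x : E) :
    inner ℝ u x - f x ≤ g u := by
  have h := le_iSup (fun x => ((inner ℝ u x : ℝ) : EReal) - (f x : EReal)) x
  rwa [← fenchel, hfg, ← EReal.coe_sub, EReal.coe_le_coe_iff] at h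

theorem mem_subdiff_coe_iff (hfg : fenchel (fun x => (f x : EReal)) = fun u => (g u : EReal))
    {x u : E} : u ∈ subdiff (fun x => (f x : EReal)) x ↔ f x + g u ≤ inner ℝ u x := by
  have hsup : (g u : EReal) ≤ ((inner ℝ u x - f x : ℝ) : EReal) ↔
      ∀ y, inner ℝ u y - f y ≤ inner ℝ u x - f x := by
    simp only [← congrFun hfg u, fenchel, iSup_le_iff, ← EReal.coe_sub, EReal.coe_le_coe_iff]
  rw [EReal.coe_le_coe_iff] at hsup
  simp only [subdiff, Set.mem_ofPred_eq, ← EReal.coe_add, EReal.coe_le_coe_iff, inner_sub_right]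
  constructor
  · intro h
    linarith [hsup.2 fun y => by linarith [h y]]
  · intro h y
    linarith [hsup.1 (by linarith), inner_sub_le_of_fenchel_coe_eq hfg u y]

theorem mem_subdiff_fenchel_of_eq (hfg : fenchel (fun x => (f x : EReal)) = fun u => (g u : EReal))
    {x u : E} (h : inner ℝ u x = f x + g u) : x ∈ subdiff (fun u => (g u : EReal)) u := by
  intro v
  rw [← EReal.coe_add, EReal.coe_le_coe_iff, inner_sub_right, real_inner_comm v x,
    real_inner_comm u x]
  linarith [inner_sub_le_of_fenchel_coe_eq hfg v x]

end Conjugate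

theorem intrinsicInterior_eq_interior_of_nonempty {V : Type*} [NormedAddCommGroup V]
    [NormedSpace ℝ V] {s : Set V} (hs : (interior s).Nonempty) :
    intrinsicInterior ℝ s = interior s := by
  refine Subset.antisymm ?_ interior_subset_intrinsicInterior
  have hspan : affineSpan ℝ s = ⊤ :=
    affineSpan_eq_top_of_nonempty_interior (hs.mono (interior_mono (subset_convexHull ℝ s)))
  have hopen : IsOpen (affineSpan ℝ s : Set V) := by
    rw [hspan, AffineSubspace.top_coe]
    exact isOpen_univ
  calc intrinsicInterior ℝ s
        ⊆ interior (Subtype.val '' (Subtype.val ⁻¹' s : Set (affineSpan ℝ s))) :=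
        hopen.isOpenMap_subtype_val.image_interior_subset _
    _ ⊆ interior s := interior_mono (image_preimage_subset _ _)

theorem corrOp_mono {R : E → EReal} {S T : Set E} (h : S ⊆ T) : corrOp R S ⊆ corrOp R T :=
  biUnion_subset_biUnion_left h

theorem IsMirrorStratifiable.domSubdiff_fenchel_subset_corrOp_univ {R : E → EReal}
    {S Sd : Set (Set E)} (h : IsMirrorStratifiable R S Sd) :
    domSubdiff (fenchel R) ⊆ corrOp R univ := by
  intro u hu
  rw [← h.dual.cover] at hu
  obtain ⟨Md, hMd, huMd⟩ := hu
  rw [← (h.pairing _ (h.maps_dual Md hMd) Md hMd).mpr rfl] at huMd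
  exact corrOp_mono (subset_univ _) huMd

section AbsQuad

def absQuad (x : ℝ) : ℝ := |x| + x ^ 2 / 2

def absQuadConj (u : ℝ) : ℝ := max (|u| - 1) 0 ^ 2 / 2

theorem absQuad_neg (x : ℝ) : absQuad (-x) = absQuad x := by
  simp only [absQuad, abs_neg, neg_sq]

theorem absQuadConj_neg (u : ℝ) : absQuadConj (-u) = absQuadConj u := by
  simp only [absQuadConj, abs_neg]

theorem mul_le_absQuad_add_absQuadConj (u x : ℝ) : u * x ≤ absQuad x + absQuadConj u := by
  set m := max (|u| - 1) 0
  have hux : u * x ≤ |u| * |x| := (le_abs_self _).trans (abs_mul u x).le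
  have hum : |u| * |x| ≤ (m + 1) * |x| :=
    mul_le_mul_of_nonneg_right (by linarith [le_max_left (|u| - 1) 0]) (abs_nonneg x)
  -- AM-GM: `m |x| ≤ (m² + x²) / 2`
  have hamgm := sq_nonneg (m - |x|)
  simp only [absQuad, absQuadConj, ← sq_abs x]
  nlinarith

theorem exists_mul_eq_absQuad_add_absQuadConj (u : ℝ) :
    ∃ x, u * x = absQuad x + absQuadConj u := by
  simp only [absQuad, absQuadConj]
  rcases le_or_gt 1 u with hu | hu
  · refine ⟨u - 1, ?_⟩
    rw [abs_of_nonneg (by linarith), abs_of_nonneg (by linarith), max_eq_left (by linarith)]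
    ring
  rcases le_or_gt u (-1) with hu' | hu'
  · refine ⟨u + 1, ?_⟩
    rw [abs_of_nonpos (by linarith), abs_of_nonpos (by linarith), max_eq_left (by linarith)]
    ring
  · refine ⟨0, ?_⟩
    rw [max_eq_right (by linarith [abs_lt.2 ⟨hu', hu⟩])]
    simp

theorem absQuad_add_absQuadConj_le_mul_iff_of_pos {x : ℝ} (hx : 0 < x) (u : ℝ) :
    absQuad x + absQuadConj u ≤ u * x ↔ u = x + 1 := by
  simp only [absQuad, absQuadConj, abs_of_pos hx]
  constructor
  · intro h
    set m := max (|u| - 1) 0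
    have hm : u - 1 ≤ m := by linarith [le_max_left (|u| - 1) 0, le_abs_self u]
    have hmx : m = x := by nlinarith [sq_nonneg (m - x)]
    nlinarith
  · rintro rfl
    rw [abs_of_pos (by linarith), max_eq_left (by linarith)]
    linarith

theorem absQuad_add_absQuadConj_le_mul_iff_of_neg {x : ℝ} (hx : x < 0) (u : ℝ) :
    absQuad x + absQuadConj u ≤ u * x ↔ u = x - 1 := by
  have h := absQuad_add_absQuadConj_le_mul_iff_of_pos (neg_pos.2 hx) (-u)
  rw [absQuad_neg, absQuadConj_neg, neg_mul_neg] at h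
  rw [h]
  constructor <;> intro h <;> linarith

theorem absQuad_add_absQuadConj_le_mul_zero_iff (u : ℝ) :
    absQuad 0 + absQuadConj u ≤ u * 0 ↔ u ∈ Icc (-1) 1 := by
  simp only [absQuad, absQuadConj, mem_Icc, ← abs_le, abs_zero, mul_zero]
  constructor
  · intro h
    by_contra hu
    have hm : 0 < max (|u| - 1) 0 := lt_max_of_lt_left (by linarith)
    nlinarith
  · intro hu
    rw [max_eq_right (by linarith)]
    norm_num

local notation "R" => fun x => ((absQuad x : ℝ) : EReal)

theorem fenchel_absQuad : fenchel R = fun u => ((absQuadConj u : ℝ) : EReal) :=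
  fenchel_coe_eq_of_fenchelYoung
    (fun u x => by simpa only [Real.inner_apply] using mul_le_absQuad_add_absQuadConj u x)
    (fun u => by simpa only [Real.inner_apply] using exists_mul_eq_absQuad_add_absQuadConj u)

theorem subdiff_absQuad_of_pos {x : ℝ} (hx : 0 < x) : subdiff R x = {x + 1} := by
  ext u
  rw [mem_subdiff_coe_iff fenchel_absQuad, Real.inner_apply, mem_singleton_iff]
  exact absQuad_add_absQuadConj_le_mul_iff_of_pos hx u

theorem subdiff_absQuad_of_neg {x : ℝ} (hx : x < 0) : subdiff R x = {x - 1} := by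
  ext u
  rw [mem_subdiff_coe_iff fenchel_absQuad, Real.inner_apply, mem_singleton_iff]
  exact absQuad_add_absQuadConj_le_mul_iff_of_neg hx u

theorem subdiff_absQuad_zero : subdiff R 0 = Icc (-1) 1 := by
  ext u
  rw [mem_subdiff_coe_iff fenchel_absQuad, Real.inner_apply]
  exact absQuad_add_absQuadConj_le_mul_zero_iff u

theorem domSubdiff_absQuad : domSubdiff R = univ := by
  refine eq_univ_of_forall fun x => ?_
  rcases lt_trichotomy x 0 with hx | rfl | hx
  · exact ⟨x - 1, by rw [subdiff_absQuad_of_neg hx]; rfl⟩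
  · exact ⟨0, by rw [subdiff_absQuad_zero]; norm_num⟩
  · exact ⟨x + 1, by rw [subdiff_absQuad_of_pos hx]; rfl⟩

theorem domSubdiff_fenchel_absQuad : domSubdiff (fenchel R) = univ := by
  refine eq_univ_of_forall fun u => ?_
  obtain ⟨x, hx⟩ := exists_mul_eq_absQuad_add_absQuadConj u
  rw [fenchel_absQuad]
  exact ⟨x, mem_subdiff_fenchel_of_eq fenchel_absQuad (by rwa [Real.inner_apply])⟩

theorem corrOp_absQuad_univ : corrOp R univ = {-1, 1}ᶜ := by
  have hIcc : intrinsicInterior ℝ (Icc (-1 : ℝ) 1) = Ioo (-1) 1 := by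
    rw [intrinsicInterior_eq_interior_of_nonempty, interior_Icc]
    simp
  ext v
  simp only [corrOp, mem_univ, iUnion_true, mem_iUnion, mem_compl_iff, mem_insert_iff,
    mem_singleton_iff, not_or]
  constructor
  · rintro ⟨x, hx⟩
    rcases lt_trichotomy x 0 with h | rfl | h
    · rw [subdiff_absQuad_of_neg h, intrinsicInterior_singleton, mem_singleton_iff] at hx
      constructor <;> linarith
    · rw [subdiff_absQuad_zero, hIcc, mem_Ioo] at hx
      constructor <;> linarith
    · rw [subdiff_absQuad_of_pos h, intrinsicInterior_singleton, mem_singleton_iff] at hx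
      constructor <;> linarith
  · rintro ⟨hv₁, hv₂⟩
    rcases lt_or_gt_of_ne hv₁ with h | h
    · refine ⟨v + 1, ?_⟩
      rw [subdiff_absQuad_of_neg (by linarith), intrinsicInterior_singleton]
      simp
    rcases lt_or_gt_of_ne hv₂ with h' | h'
    · exact ⟨0, by rw [subdiff_absQuad_zero, hIcc]; exact ⟨h, h'⟩⟩
    · refine ⟨v - 1, ?_⟩
      rw [subdiff_absQuad_of_pos (by linarith), intrinsicInterior_singleton]
      simp

end AbsQuad

/-- Remark 2.7: the function `R(x) = |x| + x²/2` on `ℝ`, whose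
conjugate is `R*(u) = (max(|u|-1,0))²/2` and which has `dom ∂R = dom ∂R* = ℝ`, is not
mirror-stratifiable; in particular `𝒥_R(ℝ) = ℝ ∖ {-1,1}`, so `𝒥_R` cannot map any
stratification of `ℝ` onto a partition of `ℝ`. -/
theorem abs_plus_quadratic_not_mirror_stratifiable :
    let R : ℝ → EReal := fun x => ((|x| + x ^ 2 / 2 : ℝ) : EReal)
    (fenchel R = fun u => (((max (|u| - 1) 0) ^ 2 / 2 : ℝ) : EReal)) ∧
    domSubdiff R = Set.univ ∧
    domSubdiff (fenchel R) = Set.univ ∧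
    corrOp R Set.univ = ({-1, 1} : Set ℝ)ᶜ ∧
    ¬ ∃ S Sd : Set (Set ℝ), IsMirrorStratifiable R S Sd := by
  refine ⟨fenchel_absQuad, domSubdiff_absQuad, domSubdiff_fenchel_absQuad, corrOp_absQuad_univ,
    ?_⟩
  rintro ⟨S, Sd, h⟩
  have hmem : (-1 : ℝ) ∈ corrOp (fun x => ((absQuad x : ℝ) : EReal)) univ :=
    h.domSubdiff_fenchel_subset_corrOp_univ (domSubdiff_fenchel_absQuad ▸ mem_univ _)
  rw [corrOp_absQuad_univ] at hmem
  exact hmem (by simp)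

end
end

section
/- Consider the parametric problem min_{x∈ℝ^N} E(x,p) = F(x,p) + R(x) with parameter p in an open subset Π of a finite-dimensional linear space, where F(·,p) is convex and C¹ on ℝ^N for each p, and R: ℝ^N → ℝ ∪ {+∞} is proper, lower semicontinuous and convex. Let p₀ ∈ Π and assume: (i) E(·,p₀) has a unique minimizer x⋆(p₀); (ii) E is lower semicontinuous on ℝ^N × Π; (iii) E(x⋆(p₀),·) is continuous at p₀; (iv) ∇F (the gradient in x) is continuous at (x⋆(p₀), p₀); (v) E is level-bounded in x locally uniformly in p around p₀. If R is mirror-stratifiable with respect to (𝒮, 𝒮*), then for all p sufficiently close to p₀, any minimizer x⋆(p) of E(·,p) satisfies M_{x⋆(p₀)} ≤ M_{x⋆(p)} ≤ 𝒥_{R*}(M*_{u⋆(p₀)}), where u⋆(p₀) = −∇F(x⋆(p₀), p₀). -/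
/-!
Minimizers `x⋆(p)` converge to `x⋆(p₀)`: by lower semicontinuity and a tube-lemma argument on a
compact set containing all minimizers near `p₀`, every point other than `x⋆(p₀)` is eventually
beaten by `x⋆(p₀)` itself. Since the strata are finitely many, a stratum meeting a small
neighbourhood of `x⋆(p₀)` has `x⋆(p₀)` in its closure, which gives the lower bound via the frontier
condition. For the upper bound, first-order optimality gives `u⋆(p) = -∇F(x⋆(p),p) ∈ ∂R(x⋆(p))`,
hence `x⋆(p) ∈ ∂R*(u⋆(p))`, and `u⋆(p) → u⋆(p₀)` by continuity of `∇F`. So the dual stratum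
`M*` of `u⋆(p)` satisfies `M*_{u⋆(p₀)} ≤ M*`; as `x⋆(p)` lies in the closure of
`ri ∂R*(u⋆(p)) ⊆ 𝒥_{R*}(M*)`, we get `M_{x⋆(p)} ≤ 𝒥_{R*}(M*) ≤ 𝒥_{R*}(M*_{u⋆(p₀)})`, the last step
because mirror-stratifiability makes `𝒥_{R*}` decreasing as well.
-/

open Filter Topology Set Pointwise

noncomputable section

variable {E : Type*} [NormedAddCommGroup E] [InnerProductSpace ℝ E]

/-- The composite parametric objective `E(x,p) = F(x,p) + R(x)`. -/
def compObj {N : ℕ} {Q : Type*} (F : EuclideanSpace ℝ (Fin N) → Q → ℝ)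
    (R : EuclideanSpace ℝ (Fin N) → EReal) (x : EuclideanSpace ℝ (Fin N)) (p : Q) : EReal :=
  ((F x p : ℝ) : EReal) + R x

theorem Convex.subset_closure_intrinsicInterior {V : Type*} [NormedAddCommGroup V]
    [NormedSpace ℝ V] [FiniteDimensional ℝ V] {s : Set V} (hs : Convex ℝ s) :
    s ⊆ closure (intrinsicInterior ℝ s) := by
  intro x hx
  let x' : affineSpan ℝ s := ⟨x, subset_affineSpan ℝ s hx⟩
  have : Nonempty (affineSpan ℝ s) := ⟨x'⟩
  -- Transport `s` to the direction of its affine span, where it has nonempty interior.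
  let φ := (AffineIsometryEquiv.constVSub ℝ x').symm
  let t : Set (affineSpan ℝ s) := (↑) ⁻¹' s
  have ht : Convex ℝ (φ ⁻¹' t) :=
    hs.affine_preimage ((affineSpan ℝ s).subtype.comp φ.toAffineEquiv.toAffineMap)
  have ht_int : (interior (φ ⁻¹' t)).Nonempty := by
    obtain ⟨_, ⟨y, hy, rfl⟩⟩ := Set.Nonempty.intrinsicInterior hs ⟨x, hx⟩
    refine ⟨φ.symm y, ?_⟩
    rw [← φ.coe_toHomeomorph, ← Homeomorph.preimage_interior]
    simpa using hy
  have hx' : x' ∈ closure (interior t) := by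
    have : φ.symm x' ∈ closure (interior (φ ⁻¹' t)) := by
      rw [ht.closure_interior_eq_closure_of_nonempty_interior ht_int]
      exact subset_closure (by simpa [t] using hx)
    rwa [← φ.coe_toHomeomorph, ← Homeomorph.preimage_interior, ← Homeomorph.preimage_closure,
      mem_preimage, φ.coe_toHomeomorph, φ.apply_symm_apply] at this
  exact image_closure_subset_closure_image continuous_subtype_val ⟨x', hx', rfl⟩

theorem stratLE_trans {X : Type*} [NormedAddCommGroup X] {M M' M'' : Set X}
    (h₁ : stratLE M M') (h₂ : stratLE M' M'') : stratLE M M'' :=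
  h₁.trans (closure_minimal h₂ isClosed_closure)

theorem convex_subdiff (R : E → EReal) (x : E) : Convex ℝ (subdiff R x) := by
  have : subdiff R x = ⋂ y, innerSL ℝ (y - x) ⁻¹' {t : ℝ | R x + t ≤ R y} := by
    ext u
    simp only [subdiff, mem_iInter, mem_preimage, innerSL_apply_apply, real_inner_comm u]
    exact Iff.rfl
  rw [this]
  refine convex_iInter fun y =>
    OrdConnected.convex ?_ |>.linear_preimage (innerSL ℝ (y - x)).toLinearMap
  exact IsLowerSet.ordConnected fun a b hba hb =>
    (add_le_add_right (EReal.coe_le_coe_iff.2 hba) _).trans hb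

namespace ProperFn

variable {X : Type*} {R : X → EReal}

theorem coe_toReal (hR : ProperFn R) {x : X} (hx : R x ≠ ⊤) : (((R x).toReal : ℝ) : EReal) = R x :=
  EReal.coe_toReal hx (hR.1 x)

theorem coe_add_ne_top_of_forall_le (hR : ProperFn R) {f : X → ℝ} {x : X}
    (hmin : ∀ y, ((f x : ℝ) : EReal) + R x ≤ ((f y : ℝ) : EReal) + R y) :
    ((f x : ℝ) : EReal) + R x ≠ ⊤ := by
  obtain ⟨y, hy⟩ := hR.2
  exact ((hmin y).trans_lt (EReal.add_lt_top (EReal.coe_ne_top _) hy)).ne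

theorem ne_top_of_mem_subdiff {R : E → EReal} (hR : ProperFn R) {x u : E}
    (hu : u ∈ subdiff R x) : R x ≠ ⊤ := by
  intro hx
  obtain ⟨y, hy⟩ := hR.2
  exact hy (top_le_iff.1 (by simpa [hx] using hu y))

end ProperFn

theorem mem_subdiff_fenchel {R : E → EReal} (hR : ProperFn R) {x u : E} (hu : u ∈ subdiff R x) :
    x ∈ subdiff (fenchel R) u := by
  set a := (R x).toReal
  have ha : R x = a := (hR.coe_toReal (hR.ne_top_of_mem_subdiff hu)).symm
  have hle : fenchel R u ≤ ((inner ℝ u x - a : ℝ) : EReal) := by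
    refine iSup_le fun y => ?_
    rcases eq_or_ne (R y) ⊤ with hy | hy
    · simp [hy]
    rw [← hR.coe_toReal hy, ← EReal.coe_sub, EReal.coe_le_coe_iff]
    have := hu y
    rw [ha, ← hR.coe_toReal hy, ← EReal.coe_add, EReal.coe_le_coe_iff, inner_sub_right] at this
    linarith
  intro v
  have hge : ((inner ℝ v x - a : ℝ) : EReal) ≤ fenchel R v := by
    have := le_iSup (fun y => ((inner ℝ v y : ℝ) : EReal) - R y) x
    rwa [ha, ← EReal.coe_sub] at this
  calc fenchel R u + ((inner ℝ x (v - u) : ℝ) : EReal)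
      ≤ ((inner ℝ u x - a : ℝ) : EReal) + ((inner ℝ x (v - u) : ℝ) : EReal) := by gcongr
    _ = ((inner ℝ v x - a : ℝ) : EReal) := by
      rw [← EReal.coe_add, inner_sub_right, real_inner_comm x v, real_inner_comm x u]
      ring_nf
    _ ≤ fenchel R v := hge

theorem ConvexFn.apply_add_smul_sub_le {R : E → EReal} (hR : ConvexFn R) {x y : E} {a b t : ℝ}
    (hx : R x ≤ a) (hy : R y ≤ b) (ht₀ : 0 ≤ t) (ht₁ : t ≤ 1) :
    R (x + t • (y - x)) ≤ ((a + t * (b - a) : ℝ) : EReal) := by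
  have h := hR (x := (x, a)) (y := (y, b)) hx hy (sub_nonneg.2 ht₁) ht₀ (by ring)
  have hcomb : (1 - t) • (x, a) + t • (y, b) = (x + t • (y - x), a + t * (b - a)) := by
    ext
    · simp only [Prod.fst_add, Prod.smul_fst]
      module
    · simp only [Prod.snd_add, Prod.smul_snd, smul_eq_mul]
      ring
  rwa [hcomb] at h

theorem le_inner_of_hasGradientAt [CompleteSpace E] {f : E → ℝ} {g x d : E} {c : ℝ}
    (hf : HasGradientAt f g x) (h : ∀ᶠ t in 𝓝[>] (0 : ℝ), c * t ≤ f (x + t • d) - f x) :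
    c ≤ inner ℝ g d := by
  have hlim := hf.hasFDerivAt.lim d (c := fun t : ℝ => t⁻¹) (l := 𝓝[>] 0)
    (tendsto_norm_atTop_atTop.comp tendsto_inv_nhdsGT_zero)
  simp only [inv_inv, InnerProductSpace.toDual_apply_apply, smul_eq_mul] at hlim
  refine ge_of_tendsto hlim ?_
  filter_upwards [h, self_mem_nhdsWithin] with t ht htpos
  rw [le_inv_mul_iff₀ htpos, mul_comm]
  exact ht

theorem neg_mem_subdiff_of_isMinimizer [CompleteSpace E] {R : E → EReal} (hRp : ProperFn R)
    (hRc : ConvexFn R) {f : E → ℝ} {g x : E} (hf : HasGradientAt f g x)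
    (hmin : ∀ y, ((f x : ℝ) : EReal) + R x ≤ ((f y : ℝ) : EReal) + R y) :
    -g ∈ subdiff R x := by
  have hx : R x ≠ ⊤ := fun hx =>
    hRp.coe_add_ne_top_of_forall_le hmin (by rw [hx, EReal.coe_add_top])
  set a := (R x).toReal
  have ha : R x = a := (hRp.coe_toReal hx).symm
  intro y
  rcases eq_or_ne (R y) ⊤ with hy | hy
  · simp [hy]
  set b := (R y).toReal
  have hb : R y = b := (hRp.coe_toReal hy).symm
  have hdescent : ∀ᶠ t in 𝓝[>] (0 : ℝ), (a - b) * t ≤ f (x + t • (y - x)) - f x := by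
    filter_upwards [Ioc_mem_nhdsGT one_pos] with t ht
    have h := (hmin _).trans
      (add_le_add_right (hRc.apply_add_smul_sub_le ha.le hb.le ht.1.le ht.2) _)
    rw [ha, ← EReal.coe_add, ← EReal.coe_add, EReal.coe_le_coe_iff] at h
    linarith
  have := le_inner_of_hasGradientAt hf hdescent
  rw [ha, hb, inner_neg_left, ← EReal.coe_add, EReal.coe_le_coe_iff]
  linarith

theorem Set.Finite.eventually_mem_closure_of_mem {X : Type*} [TopologicalSpace X]
    {S : Set (Set X)} (hS : S.Finite) (x : X) :
    ∀ᶠ y in 𝓝 x, ∀ M ∈ S, y ∈ M → x ∈ closure M := by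
  refine (hS.eventually_all).2 fun M _ => ?_
  by_cases hx : x ∈ closure M
  · exact .of_forall fun _ _ => hx
  · filter_upwards [isClosed_closure.isOpen_compl.mem_nhds hx] with y hy hyM
    exact absurd (subset_closure hyM) hy

section Argmin

variable {X P : Type*} [TopologicalSpace P] {f : X → P → EReal}
  {s : Set P} {p₀ : P} {x₀ : X}

theorem eventually_forall_isMinimizer_mem_nhds [TopologicalSpace X] (hp₀ : p₀ ∈ s)
    (hmin : ∀ x, f x₀ p₀ ≤ f x p₀)
    (huniq : ∀ x', (∀ x, f x' p₀ ≤ f x p₀) → x' = x₀)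
    (hlsc : LowerSemicontinuousOn (fun q : X × P => f q.1 q.2) (univ ×ˢ s))
    (hcont : ContinuousWithinAt (f x₀) s p₀) {K : Set X} (hK : IsCompact K)
    (hbound : ∀ᶠ p in 𝓝[s] p₀, ∀ x, (∀ y, f x p ≤ f y p) → x ∈ K) {U : Set X} (hU : U ∈ 𝓝 x₀) :
    ∀ᶠ p in 𝓝[s] p₀, ∀ x, (∀ y, f x p ≤ f y p) → x ∈ U := by
  have hstrict : ∀ x ≠ x₀, f x₀ p₀ < f x p₀ := fun x hx => by
    obtain ⟨y, hy⟩ := not_forall.1 (mt (huniq x) hx)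
    exact (hmin y).trans_lt (not_le.1 hy)
  have hbeaten : ∀ x ∈ K \ interior U, ∀ᶠ q in 𝓝 x ×ˢ 𝓝[s] p₀, f x₀ q.2 < f q.1 q.2 := by
    rintro x ⟨-, hxU⟩
    obtain ⟨b, hb₀, hb⟩ :=
      exists_between (hstrict x fun h => hxU (h ▸ mem_interior_iff_mem_nhds.2 hU))
    have hlsc_x : ∀ᶠ q in 𝓝 x ×ˢ 𝓝[s] p₀, b < f q.1 q.2 := by
      simpa [nhdsWithin_prod_eq] using hlsc (x, p₀) ⟨trivial, hp₀⟩ b hb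
    filter_upwards [hlsc_x, (hcont.eventually (gt_mem_nhds hb₀)).prod_inr _] with q h₁ h₂
    exact h₂.trans h₁
  obtain ⟨W, hW, V, hV, hWV⟩ :=
    mem_prod_iff.1 ((hK.diff isOpen_interior).mem_nhdsSet_prod_of_forall hbeaten)
  filter_upwards [hbound, hV] with p hpK hpV x hx
  by_contra hxU
  have hx' : x ∈ K \ interior U := ⟨hpK x hx, fun h => hxU (interior_subset h)⟩
  exact (hWV (mk_mem_prod (subset_of_mem_nhdsSet hW hx') hpV)).not_ge (hx x₀)

theorem exists_isCompact_eventually_forall_isMinimizer_mem [PseudoMetricSpace X] [ProperSpace X]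
    (hfin : f x₀ p₀ ≠ ⊤) (hcont : ContinuousWithinAt (f x₀) s p₀)
    (hlb : ∀ c : ℝ, ∃ V ∈ 𝓝 p₀, ∃ Ω : Set X,
      Bornology.IsBounded Ω ∧ ∀ p ∈ V ∩ s, {x | f x p ≤ (c : EReal)} ⊆ Ω) :
    ∃ K, IsCompact K ∧ ∀ᶠ p in 𝓝[s] p₀, ∀ x, (∀ y, f x p ≤ f y p) → x ∈ K := by
  obtain ⟨c, hc, -⟩ := EReal.lt_iff_exists_real_btwn.1 (lt_top_iff_ne_top.2 hfin)
  obtain ⟨V, hV, Ω, hΩ, hsub⟩ := hlb c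
  refine ⟨closure Ω, hΩ.isCompact_closure, ?_⟩
  filter_upwards [inter_mem_nhdsWithin s hV, hcont.eventually (gt_mem_nhds hc)] with p hp hpc x hx
  exact subset_closure (hsub p ⟨hp.2, hp.1⟩ ((hx x₀).trans hpc.le))

theorem eventually_forall_isMinimizer_of_eventually_prod [PseudoMetricSpace X] [ProperSpace X]
    (hp₀ : p₀ ∈ s) (hmin : ∀ x, f x₀ p₀ ≤ f x p₀)
    (huniq : ∀ x', (∀ x, f x' p₀ ≤ f x p₀) → x' = x₀)
    (hlsc : LowerSemicontinuousOn (fun q : X × P => f q.1 q.2) (univ ×ˢ s))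
    (hcont : ContinuousWithinAt (f x₀) s p₀) (hfin : f x₀ p₀ ≠ ⊤)
    (hlb : ∀ c : ℝ, ∃ V ∈ 𝓝 p₀, ∃ Ω : Set X,
      Bornology.IsBounded Ω ∧ ∀ p ∈ V ∩ s, {x | f x p ≤ (c : EReal)} ⊆ Ω)
    {Q : X × P → Prop} (hQ : ∀ᶠ q in 𝓝 x₀ ×ˢ 𝓝[s] p₀, Q q) :
    ∀ᶠ p in 𝓝[s] p₀, ∀ x, (∀ y, f x p ≤ f y p) → Q (x, p) := by
  obtain ⟨K, hK, hbound⟩ := exists_isCompact_eventually_forall_isMinimizer_mem hfin hcont hlb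
  obtain ⟨U, hU, V, hV, hUV⟩ := mem_prod_iff.1 hQ
  filter_upwards [eventually_forall_isMinimizer_mem_nhds hp₀ hmin huniq hlsc hcont hK hbound hU,
    hV] with p hpU hpV x hx
  exact hUV (mk_mem_prod (hpU x hx) hpV)

end Argmin

namespace IsMirrorStratifiable

variable {R : E → EReal} {S Sd : Set (Set E)}

theorem corrOp_fenchel_antitone (h : IsMirrorStratifiable R S Sd) {Md Md' : Set E}
    (hMd : Md ∈ Sd) (hMd' : Md' ∈ Sd) (hle : stratLE Md Md') :
    stratLE (corrOp (fenchel R) Md') (corrOp (fenchel R) Md) := by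
  have hM := h.maps_dual Md hMd
  have hM' := h.maps_dual Md' hMd'
  rwa [h.decreasing _ hM' _ hM, (h.pairing _ hM Md hMd).2 rfl, (h.pairing _ hM' Md' hMd').2 rfl]

theorem stratLE_corrOp_fenchel_of_mem_subdiff [FiniteDimensional ℝ E]
    (h : IsMirrorStratifiable R S Sd) {M Md₀ : Set E} (hM : M ∈ S) (hMd₀ : Md₀ ∈ Sd)
    {x u u₀ : E} (hu₀ : u₀ ∈ Md₀) (hx : x ∈ M) (hxu : x ∈ subdiff (fenchel R) u)
    (hnear : ∀ Md ∈ Sd, u ∈ Md → u₀ ∈ closure Md) :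
    stratLE M (corrOp (fenchel R) Md₀) := by
  obtain ⟨Md, hMd, huMd⟩ : u ∈ ⋃₀ Sd := h.dual.cover ▸ ⟨x, hxu⟩
  have hx_cl : x ∈ closure (corrOp (fenchel R) Md) :=
    closure_mono (subset_biUnion_of_mem (u := fun v => intrinsicInterior ℝ (subdiff (fenchel R) v))
      huMd) ((convex_subdiff _ _).subset_closure_intrinsicInterior hxu)
  have hM_le : stratLE M (corrOp (fenchel R) Md) :=
    h.primal.frontier_cond M hM _ (h.maps_dual Md hMd) ⟨x, hx, hx_cl⟩
  exact stratLE_trans hM_le (h.corrOp_fenchel_antitone hMd₀ hMd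
    (h.dual.frontier_cond _ hMd₀ _ hMd ⟨u₀, hu₀, hnear Md hMd huMd⟩))

end IsMirrorStratifiable

theorem sensitivity_mirror_stratifiable_general
    {N : ℕ} {Q : Type*} [NormedAddCommGroup Q]
    (Pi : Set Q) (p₀ : Q) (hp₀ : p₀ ∈ Pi)
    (F : EuclideanSpace ℝ (Fin N) → Q → ℝ)
    (gF : EuclideanSpace ℝ (Fin N) → Q → EuclideanSpace ℝ (Fin N))
    (hFgrad : ∀ p ∈ Pi, ∀ x, HasGradientAt (fun z => F z p) (gF x p) x)
    (R : EuclideanSpace ℝ (Fin N) → EReal) (hR : ProperConvexLsc R)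
    -- (i) unique minimizer of `E(·,p₀)`
    (xstar : EuclideanSpace ℝ (Fin N))
    (hmin : ∀ x, compObj F R xstar p₀ ≤ compObj F R x p₀)
    (huniq : ∀ x', (∀ x, compObj F R x' p₀ ≤ compObj F R x p₀) → x' = xstar)
    -- (ii) `E` lsc on `ℝ^N × Π`
    (hlsc : LowerSemicontinuousOn (fun q : EuclideanSpace ℝ (Fin N) × Q => compObj F R q.1 q.2)
      (Set.univ ×ˢ Pi))
    -- (iii) `E(x⋆(p₀),·)` continuous at `p₀`
    (hcont : ContinuousWithinAt (fun p => compObj F R xstar p) Pi p₀)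
    -- (iv) `∇F` continuous at `(x⋆(p₀),p₀)`
    (hgcont : ContinuousWithinAt (fun q : EuclideanSpace ℝ (Fin N) × Q => gF q.1 q.2)
      (Set.univ ×ˢ Pi) (xstar, p₀))
    -- (v) level-boundedness in `x` locally uniformly in `p` around `p₀`
    (hlb : ∀ c : ℝ, ∃ V ∈ 𝓝 p₀, ∃ Ω : Set (EuclideanSpace ℝ (Fin N)),
      Bornology.IsBounded Ω ∧ ∀ p ∈ V ∩ Pi, {x | compObj F R x p ≤ (c : EReal)} ⊆ Ω)
    -- mirror-stratifiability of `R`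
    (S Sd : Set (Set (EuclideanSpace ℝ (Fin N))))
    (hms : IsMirrorStratifiable R S Sd)
    (Mx0 : Set (EuclideanSpace ℝ (Fin N))) (hMx0 : Mx0 ∈ S) (hxstar : xstar ∈ Mx0)
    (Mu0 : Set (EuclideanSpace ℝ (Fin N))) (hMu0 : Mu0 ∈ Sd) (hu0 : -gF xstar p₀ ∈ Mu0) :
    ∃ ε > (0:ℝ), ∀ p ∈ Pi, dist p p₀ < ε →
      ∀ xp, (∀ x, compObj F R xp p ≤ compObj F R x p) →
        ∀ Mp ∈ S, xp ∈ Mp →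
          stratLE Mx0 Mp ∧ stratLE Mp (corrOp (fenchel R) Mu0) := by
  obtain ⟨hRp, hRc, -⟩ := hR
  have hfin : compObj F R xstar p₀ ≠ ⊤ := hRp.coe_add_ne_top_of_forall_le (f := (F · p₀)) hmin
  have hgF : Tendsto (fun q => -gF q.1 q.2) (𝓝 xstar ×ˢ 𝓝[Pi] p₀) (𝓝 (-gF xstar p₀)) := by
    have := hgcont.neg
    rwa [ContinuousWithinAt, nhdsWithin_prod_eq, nhdsWithin_univ] at this
  have hnear := ((hms.primal.finite.eventually_mem_closure_of_mem xstar).prod_inl _).and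
    (hgF.eventually (hms.dual.finite.eventually_mem_closure_of_mem _))
  obtain ⟨ε, hε, hball⟩ := Metric.eventually_nhds_iff.1 <| eventually_nhdsWithin_iff.1 <|
    eventually_forall_isMinimizer_of_eventually_prod hp₀ hmin huniq hlsc hcont hfin hlb hnear
  refine ⟨ε, hε, fun p hp hpε xp hxp Mp hMp hxMp => ?_⟩
  obtain ⟨hprimal, hdual⟩ := hball hpε hp xp hxp
  have hsub : -gF xp p ∈ subdiff R xp := neg_mem_subdiff_of_isMinimizer hRp hRc (hFgrad p hp xp) hxp
  exact ⟨hms.primal.frontier_cond _ hMx0 _ hMp ⟨xstar, hxstar, hprimal Mp hMp hxMp⟩,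
    hms.stratLE_corrOp_fenchel_of_mem_subdiff hMp hMu0 hu0 hxMp
      (mem_subdiff_fenchel hRp hsub) hdual⟩

/-- Theorem 3.2, sensitivity without non-degeneracy: under
assumptions (i)-(v), if `R` is mirror-stratifiable then for all `p` close to `p₀`
every minimizer `x⋆(p)` of `E(·,p)` satisfies
`M_{x⋆(p₀)} ≤ M_{x⋆(p)} ≤ 𝒥_{R*}(M*_{u⋆(p₀)})` with `u⋆(p₀) = -∇F(x⋆(p₀),p₀)`. -/
theorem sensitivity_mirror_stratifiable
    {N : ℕ} {Q : Type*} [NormedAddCommGroup Q] [NormedSpace ℝ Q] [FiniteDimensional ℝ Q]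
    (Pi : Set Q) (hPi : IsOpen Pi) (p₀ : Q) (hp₀ : p₀ ∈ Pi)
    (F : EuclideanSpace ℝ (Fin N) → Q → ℝ)
    (gF : EuclideanSpace ℝ (Fin N) → Q → EuclideanSpace ℝ (Fin N))
    (hFconv : ∀ p ∈ Pi, ConvexOn ℝ Set.univ (fun x => F x p))
    (hFgrad : ∀ p ∈ Pi, ∀ x, HasGradientAt (fun z => F z p) (gF x p) x)
    (R : EuclideanSpace ℝ (Fin N) → EReal) (hR : ProperConvexLsc R)
    -- (i) unique minimizer of `E(·,p₀)`
    (xstar : EuclideanSpace ℝ (Fin N))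
    (hmin : ∀ x, compObj F R xstar p₀ ≤ compObj F R x p₀)
    (huniq : ∀ x', (∀ x, compObj F R x' p₀ ≤ compObj F R x p₀) → x' = xstar)
    -- (ii) `E` lsc on `ℝ^N × Π`
    (hlsc : LowerSemicontinuousOn (fun q : EuclideanSpace ℝ (Fin N) × Q => compObj F R q.1 q.2)
      (Set.univ ×ˢ Pi))
    -- (iii) `E(x⋆(p₀),·)` continuous at `p₀`
    (hcont : ContinuousWithinAt (fun p => compObj F R xstar p) Pi p₀)
    -- (iv) `∇F` continuous at `(x⋆(p₀),p₀)`
    (hgcont : ContinuousWithinAt (fun q : EuclideanSpace ℝ (Fin N) × Q => gF q.1 q.2)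
      (Set.univ ×ˢ Pi) (xstar, p₀))
    -- (v) level-boundedness in `x` locally uniformly in `p` around `p₀`
    (hlb : ∀ c : ℝ, ∃ V ∈ 𝓝 p₀, ∃ Ω : Set (EuclideanSpace ℝ (Fin N)),
      Bornology.IsBounded Ω ∧ ∀ p ∈ V ∩ Pi, {x | compObj F R x p ≤ (c : EReal)} ⊆ Ω)
    -- mirror-stratifiability of `R`
    (S Sd : Set (Set (EuclideanSpace ℝ (Fin N))))
    (hms : IsMirrorStratifiable R S Sd)
    (Mx0 : Set (EuclideanSpace ℝ (Fin N))) (hMx0 : Mx0 ∈ S) (hxstar : xstar ∈ Mx0)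
    (Mu0 : Set (EuclideanSpace ℝ (Fin N))) (hMu0 : Mu0 ∈ Sd) (hu0 : -gF xstar p₀ ∈ Mu0) :
    ∃ ε > (0:ℝ), ∀ p ∈ Pi, dist p p₀ < ε →
      ∀ xp, (∀ x, compObj F R xp p ≤ compObj F R x p) →
        ∀ Mp ∈ S, xp ∈ Mp →
          stratLE Mx0 Mp ∧ stratLE Mp (corrOp (fenchel R) Mu0) :=
  sensitivity_mirror_stratifiable_general Pi p₀ hp₀ F gF hFgrad R hR xstar hmin huniq hlsc hcont
    hgcont hlb S Sd hms Mx0 hMx0 hxstar Mu0 hMu0 hu0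

end
end
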